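/- Let G be a finite group and L < H subgroups with L, H ∈ CD(G) such that the interval ⟦L,H⟧ in CD(G) is a quasi-antichain having at least three pairwise distinct atoms. Then any two atoms K, K' of the interval have the same order; for any atom K1, |H|·|L| = |K1|² (equivalently, the index of L in H is the square of the index of K1 in H); and |H|·|C_G(H)| = |L|·|C_G(L)|, so that the index of L in H equals the index of C_G(H) in C_G(L). -/

import Mathlib

/-!
For `A, B ∈ CD(G)` the product formula `|A||B| ≤ |A ⊓ B||A ⊔ B|` and its centralizer dual
`|C(A)||C(B)| ≤ |C(A ⊔ B)||C(A ⊓ B)|` multiply to `m(A)m(B) ≤ m(A ⊓ B)m(A ⊔ B)`; maximality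
of the measure turns both into equalities, so `CD(G)` is a sublattice and
`|A||B| = |A ⊓ B||A ⊔ B|`. For distinct atoms `K, K'` of the quasi-antichain `⟦L, H⟧` this gives
`K ⊓ K' = L`, `K ⊔ K' = H`, hence `|K||K'| = |L||H|`, and with three pairwise distinct atoms
every atom has order `√(|L||H|)`. The index identities then follow from `|B| = |A|·|B : A|`
and `m(H) = m(L)`.
-/

/-- The Chermak-Delgado measure of a subgroup `H` of a finite group `G`:
`m_G(H) = |H| · |C_G(H)|`. -/
noncomputable def CDmeasure {G : Type*} [Group G] (H : Subgroup G) : ℕ :=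
  Nat.card H * Nat.card (Subgroup.centralizer (H : Set G))

/-- `H` belongs to the Chermak-Delgado lattice of `G`: its measure is maximal. -/
def inCD {G : Type*} [Group G] (H : Subgroup G) : Prop :=
  ∀ K : Subgroup G, CDmeasure K ≤ CDmeasure H

theorem exists_pair_ne_ne_of_three {α : Type*} {P : α → Prop} {a b c : α} (ha : P a) (hb : P b)
    (hc : P c) (hab : a ≠ b) (hac : a ≠ c) (hbc : b ≠ c) (x : α) :
    ∃ y z, P y ∧ P z ∧ x ≠ y ∧ x ≠ z ∧ y ≠ z := by
  by_cases hxa : x = a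
  · exact ⟨b, c, hb, hc, hxa ▸ hab, hxa ▸ hac, hbc⟩
  by_cases hxb : x = b
  · exact ⟨a, c, ha, hc, hxa, hxb ▸ hbc, hac⟩
  · exact ⟨a, b, ha, hb, hxa, hxb, hab⟩

namespace Subgroup

variable {G : Type*} [Group G]

theorem card_mul_relIndex {A B : Subgroup G} (h : A ≤ B) :
    Nat.card A * A.relIndex B = Nat.card B := by
  rw [← relIndex_bot_left, ← relIndex_bot_left]
  exact relIndex_mul_relIndex _ _ _ bot_le h

theorem centralizer_sup (A B : Subgroup G) :
    centralizer ((A ⊔ B : Subgroup G) : Set G) = centralizer (A : Set G) ⊓ centralizer B := by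
  rw [sup_eq_closure, centralizer_closure]
  exact SetLike.coe_injective Set.centralizer_union

variable [Finite G]

theorem card_mul_card_le_card_inf_mul_card_sup (A B : Subgroup G) :
    Nat.card A * Nat.card B ≤ Nat.card (A ⊓ B : Subgroup G) * Nat.card (A ⊔ B : Subgroup G) :=
  calc Nat.card A * Nat.card B
      = Nat.card (A ⊓ B : Subgroup G) * (Nat.card A * A.relIndex B) := by
        rw [← card_mul_relIndex (inf_le_right : A ⊓ B ≤ B), inf_relIndex_right]; ring
    _ ≤ Nat.card (A ⊓ B : Subgroup G) * (Nat.card A * A.relIndex (A ⊔ B)) := by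
        gcongr
        exact relIndex_le_of_le_right le_sup_right index_ne_zero_of_finite
    _ = Nat.card (A ⊓ B : Subgroup G) * Nat.card (A ⊔ B : Subgroup G) := by
        rw [card_mul_relIndex le_sup_left]

theorem card_centralizer_mul_card_centralizer_le (A B : Subgroup G) :
    Nat.card (centralizer (A : Set G)) * Nat.card (centralizer (B : Set G)) ≤
      Nat.card (centralizer ((A ⊔ B : Subgroup G) : Set G)) *
        Nat.card (centralizer ((A ⊓ B : Subgroup G) : Set G)) := by
  refine (card_mul_card_le_card_inf_mul_card_sup _ _).trans ?_
  rw [← centralizer_sup]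
  gcongr
  exact card_le_of_le <| sup_le (centralizer_le (inf_le_left : A ⊓ B ≤ A))
    (centralizer_le (inf_le_right : A ⊓ B ≤ B))

theorem relIndex_eq_relIndex_of_card_mul_eq {A B C D : Subgroup G} (hAB : A ≤ B) (hCD : C ≤ D)
    (h : Nat.card B * Nat.card C = Nat.card A * Nat.card D) :
    A.relIndex B = C.relIndex D := by
  refine Nat.eq_of_mul_eq_mul_left
    (Nat.mul_pos (Nat.card_pos (α := A)) (Nat.card_pos (α := C))) ?_
  calc Nat.card A * Nat.card C * A.relIndex B
      = Nat.card B * Nat.card C := by rw [← card_mul_relIndex hAB]; ring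
    _ = Nat.card A * Nat.card D := h
    _ = Nat.card A * Nat.card C * C.relIndex D := by rw [← card_mul_relIndex hCD]; ring

theorem relIndex_eq_relIndex_sq_of_card_mul_eq_sq {L K H : Subgroup G} (hL : L ≤ H) (hK : K ≤ H)
    (h : Nat.card H * Nat.card L = Nat.card K ^ 2) :
    L.relIndex H = K.relIndex H ^ 2 := by
  refine Nat.eq_of_mul_eq_mul_right (pow_pos (Nat.card_pos (α := K)) 2) ?_
  calc L.relIndex H * Nat.card K ^ 2
      = Nat.card H * (Nat.card L * L.relIndex H) := by rw [← h]; ring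
    _ = (Nat.card K * K.relIndex H) ^ 2 := by rw [card_mul_relIndex hL, card_mul_relIndex hK, sq]
    _ = K.relIndex H ^ 2 * Nat.card K ^ 2 := by ring

end Subgroup

section ChermakDelgado

open Subgroup

variable {G : Type*} [Group G]

theorem inCD.CDmeasure_eq {A B : Subgroup G} (hA : inCD A) (hB : inCD B) :
    CDmeasure A = CDmeasure B :=
  le_antisymm (hB A) (hA B)

variable [Finite G]

theorem CDmeasure_pos (A : Subgroup G) : 0 < CDmeasure A :=
  Nat.mul_pos Nat.card_pos Nat.card_pos

theorem inCD.inf_sup {A B : Subgroup G} (hA : inCD A) (hB : inCD B) :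
    inCD (A ⊓ B) ∧ inCD (A ⊔ B) ∧
      Nat.card A * Nat.card B =
        Nat.card (A ⊓ B : Subgroup G) * Nat.card (A ⊔ B : Subgroup G) := by
  have hcard := card_mul_card_le_card_inf_mul_card_sup A B
  have hcent := card_centralizer_mul_card_centralizer_le A B
  have hmeasure : CDmeasure A * CDmeasure B = CDmeasure (A ⊓ B) * CDmeasure (A ⊔ B) := by
    refine le_antisymm ?_ (Nat.mul_le_mul (hA _) (hB _))
    calc CDmeasure A * CDmeasure B
        = Nat.card A * Nat.card B *
            (Nat.card (centralizer (A : Set G)) * Nat.card (centralizer (B : Set G))) := by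
          unfold CDmeasure; ring
      _ ≤ _ := Nat.mul_le_mul hcard hcent
      _ = CDmeasure (A ⊓ B) * CDmeasure (A ⊔ B) := by unfold CDmeasure; ring
  obtain ⟨hinf, hsup⟩ := (mul_eq_mul_iff_eq_and_eq_of_pos (hA (A ⊓ B)) (hB (A ⊔ B))
    (CDmeasure_pos _) (CDmeasure_pos _)).1 hmeasure.symm
  refine ⟨fun K ↦ hinf ▸ hA K, fun K ↦ hsup ▸ hB K, ?_⟩
  refine ((mul_eq_mul_iff_eq_and_eq_of_pos hcard hcent
    (Nat.mul_pos Nat.card_pos Nat.card_pos) (Nat.mul_pos Nat.card_pos Nat.card_pos)).1 ?_).1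
  calc _ = CDmeasure A * CDmeasure B := by unfold CDmeasure; ring
    _ = CDmeasure (A ⊓ B) * CDmeasure (A ⊔ B) := hmeasure
    _ = _ := by unfold CDmeasure; ring

def IsCDAtom (L H K : Subgroup G) : Prop :=
  inCD K ∧ L < K ∧ K < H

def IsAntichainCDInterval (L H : Subgroup G) : Prop :=
  ∀ K K' : Subgroup G, inCD K → inCD K' → L < K → K ≤ K' → K' < H → K = K'

variable {L H K K' : Subgroup G} (hqa : IsAntichainCDInterval L H)
include hqa

theorem IsCDAtom.inf_eq_and_sup_eq (hK : IsCDAtom L H K) (hK' : IsCDAtom L H K')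
    (hne : K ≠ K') : K ⊓ K' = L ∧ K ⊔ K' = H := by
  have hKK' : ¬ K ≤ K' := fun hle ↦ hne (hqa K K' hK.1 hK'.1 hK.2.1 hle hK'.2.2)
  obtain ⟨hinf, hsup, -⟩ := hK.1.inf_sup hK'.1
  constructor
  · refine ((le_inf hK.2.1.le hK'.2.1.le).lt_or_eq.resolve_left fun hlt ↦ hKK' ?_).symm
    exact hqa (K ⊓ K') K hinf hK.1 hlt inf_le_left hK.2.2 ▸ inf_le_right
  · refine (sup_le hK.2.2.le hK'.2.2.le).lt_or_eq.resolve_left fun hlt ↦ hKK' ?_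
    exact (hqa K' (K ⊔ K') hK'.1 hsup hK'.2.1 le_sup_right hlt).symm ▸ le_sup_left

theorem IsCDAtom.card_mul_card (hK : IsCDAtom L H K) (hK' : IsCDAtom L H K') (hne : K ≠ K') :
    Nat.card K * Nat.card K' = Nat.card L * Nat.card H := by
  obtain ⟨hinf, hsup⟩ := hK.inf_eq_and_sup_eq hqa hK' hne
  rw [(hK.1.inf_sup hK'.1).2.2, hinf, hsup]

theorem IsCDAtom.card_sq {A B : Subgroup G} (hK : IsCDAtom L H K) (hA : IsCDAtom L H A)
    (hB : IsCDAtom L H B) (hKA : K ≠ A) (hKB : K ≠ B) (hAB : A ≠ B) :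
    Nat.card K ^ 2 = Nat.card L * Nat.card H := by
  have hKA' := hK.card_mul_card hqa hA hKA
  have hAB' := hA.card_mul_card hqa hB hAB
  have hcardAB : Nat.card A = Nat.card B :=
    Nat.eq_of_mul_eq_mul_left Nat.card_pos (hKA'.trans (hK.card_mul_card hqa hB hKB).symm)
  rw [← hcardAB] at hAB'
  have hcardKA : Nat.card K = Nat.card A :=
    Nat.eq_of_mul_eq_mul_right Nat.card_pos (hKA'.trans hAB'.symm)
  rw [sq, hcardKA, hAB']

end ChermakDelgado

/-- if the interval `⟦L,H⟧` in `CD(G)` is a quasi-antichain with at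
least three pairwise distinct atoms, then any two atoms have the same order, for
any atom `K1` we have `|H|·|L| = |K1|²` (equivalently `|H : K1|² = |H : L|`), and
`|H|·|C_G(H)| = |L|·|C_G(L)|`, so `|H : L| = |C_G(L) : C_G(H)|`. -/
theorem stmt2 {G : Type*} [Group G] [Finite G] (L H : Subgroup G) (hLH : L < H)
    (hL : inCD L) (hH : inCD H)
    (hqa : ∀ K K' : Subgroup G, inCD K → inCD K' → L < K → K ≤ K' → K' < H → K = K')
    (hthree : ∃ K1 K2 K3 : Subgroup G,
      (inCD K1 ∧ L < K1 ∧ K1 < H) ∧ (inCD K2 ∧ L < K2 ∧ K2 < H) ∧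
      (inCD K3 ∧ L < K3 ∧ K3 < H) ∧ K1 ≠ K2 ∧ K1 ≠ K3 ∧ K2 ≠ K3) :
    (∀ K K' : Subgroup G, (inCD K ∧ L < K ∧ K < H) → (inCD K' ∧ L < K' ∧ K' < H) →
      Nat.card K = Nat.card K') ∧
    (∀ K1 : Subgroup G, (inCD K1 ∧ L < K1 ∧ K1 < H) →
      Nat.card H * Nat.card L = Nat.card K1 ^ 2 ∧
      L.relIndex H = K1.relIndex H ^ 2) ∧
    Nat.card H * Nat.card (Subgroup.centralizer (H : Set G)) =
      Nat.card L * Nat.card (Subgroup.centralizer (L : Set G)) ∧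
    L.relIndex H =
      (Subgroup.centralizer (H : Set G)).relIndex (Subgroup.centralizer (L : Set G)) := by
  obtain ⟨K1, K2, K3, h1, h2, h3, h12, h13, h23⟩ := hthree
  have hsq (K : Subgroup G) (hK : IsCDAtom L H K) : Nat.card H * Nat.card L = Nat.card K ^ 2 := by
    obtain ⟨A, B, hA, hB, hKA, hKB, hAB⟩ :=
      exists_pair_ne_ne_of_three (P := IsCDAtom L H) h1 h2 h3 h12 h13 h23 K
    rw [hK.card_sq hqa hA hB hKA hKB hAB, mul_comm]
  have hmeasure : CDmeasure H = CDmeasure L := hH.CDmeasure_eq hL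
  refine ⟨fun K K' hK hK' ↦ ?_, fun K hK ↦ ?_, hmeasure, ?_⟩
  · exact Nat.pow_left_injective two_ne_zero ((hsq K hK).symm.trans (hsq K' hK'))
  · exact ⟨hsq K hK,
      Subgroup.relIndex_eq_relIndex_sq_of_card_mul_eq_sq hLH.le hK.2.2.le (hsq K hK)⟩
  · exact Subgroup.relIndex_eq_relIndex_of_card_mul_eq hLH.le
      (Subgroup.centralizer_le hLH.le) hmeasure
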